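/- arXiv:2211.16809 — 6 statements merged into one kernel-verified Lean document; each statement's English description precedes it below -/
import Mathlib

section
/- Let H be a finite group with subgroups X and Y, each isomorphic to C_2^n, such that H is generated by X ∪ Y and H/H' is isomorphic to C_2^{2n} (where H' is the derived subgroup). Then X ∩ Y = 1. -/
/-!
Map `H` onto its abelianization `A`. Since `A` is abelian and generated by the images of `X`
and `Y`, the map `X × Y → A, (x, y) ↦ x̄ ȳ` is onto; both sides have `2 ^ (2n)` elements, so
it is a bijection. An element `z ∈ X ∩ Y` gives `(z, z⁻¹) ↦ 1`, hence `z = 1`.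
-/

open Subgroup

theorem Subgroup.exists_mul_map_eq_of_sup_eq_top {G A : Type*} [Group G] [CommGroup A]
    {X Y : Subgroup G} (hXY : X ⊔ Y = ⊤) {f : G →* A} (hf : Function.Surjective f) (a : A) :
    ∃ x : X, ∃ y : Y, f x * f y = a := by
  have ha : a ∈ (X ⊔ Y).map f := by
    rw [hXY, ← MonoidHom.range_eq_map, MonoidHom.range_eq_top.mpr hf]
    exact mem_top a
  rw [map_sup, mem_sup] at ha
  obtain ⟨_, ⟨x, hx, rfl⟩, _, ⟨y, hy, rfl⟩, hxy⟩ := ha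
  exact ⟨⟨x, hx⟩, ⟨y, hy⟩, hxy⟩

theorem Subgroup.inf_eq_bot_of_injective_mul_map {G A : Type*} [Group G] [Group A]
    {X Y : Subgroup G} (f : G →* A)
    (hinj : Function.Injective fun p : X × Y ↦ f p.1 * f p.2) : X ⊓ Y = ⊥ := by
  refine (eq_bot_iff_forall _).mpr fun z ⟨hzX, hzY⟩ ↦ ?_
  have := @hinj (⟨z, hzX⟩, ⟨z⁻¹, inv_mem hzY⟩) (1, 1) (by simp)
  exact congrArg (fun p ↦ (p.1 : G)) this

theorem Subgroup.inf_eq_bot_of_card_mul_le {G A : Type*} [Group G] [CommGroup A]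
    {X Y : Subgroup G} [Finite X] [Finite Y] (hXY : X ⊔ Y = ⊤) {f : G →* A}
    (hf : Function.Surjective f) (hcard : Nat.card X * Nat.card Y ≤ Nat.card A) :
    X ⊓ Y = ⊥ := by
  have hsurj : Function.Surjective fun p : X × Y ↦ f p.1 * f p.2 := fun a ↦ by
    obtain ⟨x, y, h⟩ := exists_mul_map_eq_of_sup_eq_top hXY hf a
    exact ⟨(x, y), h⟩
  rw [← Nat.card_prod] at hcard
  exact inf_eq_bot_of_injective_mul_map f (hsurj.bijective_of_nat_card_le hcard).injective

theorem card_fin_to_zmod_two (n : ℕ) : Nat.card (Fin n → Multiplicative (ZMod 2)) = 2 ^ n := by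
  simp

theorem statement0_general {H : Type*} [Group H] (n : ℕ)
    (X Y : Subgroup H)
    (hX : Nonempty (X ≃* (Fin n → Multiplicative (ZMod 2))))
    (hY : Nonempty (Y ≃* (Fin n → Multiplicative (ZMod 2))))
    (hgen : Subgroup.closure ((X : Set H) ∪ (Y : Set H)) = ⊤)
    (hab : Nonempty ((H ⧸ commutator H) ≃* (Fin (2 * n) → Multiplicative (ZMod 2)))) :
    X ⊓ Y = ⊥ := by
  have := Finite.of_equiv _ hX.some.symm.toEquiv
  have := Finite.of_equiv _ hY.some.symm.toEquiv
  refine inf_eq_bot_of_card_mul_le (by rwa [sup_eq_closure])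
    (f := Abelianization.of) QuotientGroup.mk_surjective (le_of_eq ?_)
  rw [Nat.card_congr hX.some.toEquiv, Nat.card_congr hY.some.toEquiv,
    show Nat.card (Abelianization H) = _ from Nat.card_congr hab.some.toEquiv]
  simp only [card_fin_to_zmod_two, ← pow_add, two_mul]

/-- If `H` is an `n`-dimensional mixed dihedral group relative to `X` and `Y`
(`X ≅ Y ≅ C_2^n`, `H = ⟨X ∪ Y⟩`, `H/H' ≅ C_2^{2n}`), then `X ∩ Y = 1`. -/
theorem statement0 {H : Type*} [Group H] [Finite H] (n : ℕ) (hn : 1 ≤ n)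
    (X Y : Subgroup H)
    (hX : Nonempty (X ≃* (Fin n → Multiplicative (ZMod 2))))
    (hY : Nonempty (Y ≃* (Fin n → Multiplicative (ZMod 2))))
    (hgen : Subgroup.closure ((X : Set H) ∪ (Y : Set H)) = ⊤)
    (hab : Nonempty ((H ⧸ commutator H) ≃* (Fin (2 * n) → Multiplicative (ZMod 2)))) :
    X ⊓ Y = ⊥ :=
  statement0_general n X Y hX hY hgen hab
end

section
/- Let Γ be a finite connected graph with more than one edge, and suppose G ≤ Aut(Γ) is abelian, edge-transitive, and vertex-transitive. Then Γ is a cycle C_n for some n ≥ 3 and G is cyclic of order n. -/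
/-!
An abelian transitive permutation group is regular: if `g v = h v` then
`g (k v) = k (g v) = k (h v) = h (k v)` for every `k`, so `g = h`. Hence `g ↦ g v` identifies
`G` with `V`. Choose `σ ∈ G` with `v ~ σ v`. Every edge is the image of `{v, σ v}` under some
element of `G`, and regularity turns this into: `g v ~ h v` iff `h = g σ` or `g = h σ`. So `Γ` is
the Cayley graph of `G` with respect to `{σ, σ⁻¹}`, connectivity gives `G = ⟨σ⟩` of order `|V|`,
and `i ↦ σ ^ i v` is an isomorphism from the cycle on `|V|` vertices. Two edges force `|V| ≥ 3`.
-/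

open SimpleGraph Subgroup

namespace Equiv.Perm

variable {V : Type*} {G : Subgroup (Perm V)}

theorem eq_of_apply_eq_of_comm_of_transitive (hab : ∀ a ∈ G, ∀ b ∈ G, a * b = b * a)
    (hvtrans : ∀ u v : V, ∃ g ∈ G, g u = v) {g h : Perm V} (hg : g ∈ G) (hh : h ∈ G) {v : V}
    (hgh : g v = h v) : g = h := by
  ext u
  obtain ⟨k, hk, rfl⟩ := hvtrans v u
  calc g (k v) = k (g v) := DFunLike.congr_fun (hab g hg k hk) v
    _ = k (h v) := by rw [hgh]
    _ = h (k v) := DFunLike.congr_fun (hab k hk h hh) v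

theorem natCard_eq_of_comm_of_transitive (hab : ∀ a ∈ G, ∀ b ∈ G, a * b = b * a)
    (hvtrans : ∀ u v : V, ∃ g ∈ G, g u = v) (v : V) : Nat.card G = Nat.card V :=
  Nat.card_eq_of_bijective (fun g : G ↦ (g : Perm V) v)
    ⟨fun g h hgh ↦ Subtype.ext (eq_of_apply_eq_of_comm_of_transitive hab hvtrans g.2 h.2 hgh),
      fun u ↦ let ⟨g, hg, hgu⟩ := hvtrans v u; ⟨⟨g, hg⟩, hgu⟩⟩

end Equiv.Perm

theorem pow_val_mul_self_eq_pow_val_iff {M : Type*} [LeftCancelMonoid M] {x : M} {n : ℕ}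
    [NeZero n] (hx : orderOf x = n) (i j : Fin n) :
    x ^ (i : ℕ) * x = x ^ (j : ℕ) ↔ i + 1 = j := by
  rw [← pow_succ, pow_eq_pow_iff_modEq, hx, Fin.ext_iff, Fin.val_add, Fin.val_one',
    Nat.add_mod_mod, Nat.ModEq, Nat.mod_eq_of_lt j.isLt]

namespace SimpleGraph

variable {V : Type*} {Γ : SimpleGraph V}

theorem Preconnected.forall_mem_of_adj_mem (hΓ : Γ.Preconnected) {S : Set V} {v : V}
    (hv : v ∈ S) (hS : ∀ u w, Γ.Adj u w → u ∈ S → w ∈ S) (u : V) : u ∈ S := by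
  obtain ⟨p⟩ := hΓ v u
  induction p with
  | nil => exact hv
  | cons hadj _ ih => exact ih (hS _ _ hadj hv)

theorem three_le_card_of_one_lt_ncard_edgeSet [Fintype V] (hE : 1 < Γ.edgeSet.ncard) :
    3 ≤ Fintype.card V := by
  classical
  by_contra! hV
  have : Γ.edgeSet.ncard ≤ Nat.choose 2 2 := by
    rw [← coe_edgeFinset, Set.ncard_coe_finset]
    exact card_edgeFinset_le_card_choose_two.trans (Nat.choose_le_choose 2 (by omega))
  rw [Nat.choose_self] at this
  omega

variable {G : Subgroup (Equiv.Perm V)}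

theorem exists_mem_adj_apply (hAut : ∀ g ∈ G, ∀ u v : V, Γ.Adj (g u) (g v) ↔ Γ.Adj u v)
    (hvtrans : ∀ u v : V, ∃ g ∈ G, g u = v) (hE : Γ.edgeSet.Nonempty) (v : V) :
    ∃ σ ∈ G, Γ.Adj v (σ v) := by
  obtain ⟨a, b, hadj⟩ := ne_bot_iff_exists_adj.1 (edgeSet_nonempty.1 hE)
  obtain ⟨g, hg, rfl⟩ := hvtrans a v
  obtain ⟨σ, hσ, hσv⟩ := hvtrans (g a) (g b)
  exact ⟨σ, hσ, hσv ▸ (hAut g hg a b).2 hadj⟩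

structure IsAbelianTransitiveGroup (Γ : SimpleGraph V) (G : Subgroup (Equiv.Perm V)) : Prop where
  adj_iff : ∀ g ∈ G, ∀ u v : V, Γ.Adj (g u) (g v) ↔ Γ.Adj u v
  comm : ∀ a ∈ G, ∀ b ∈ G, a * b = b * a
  edge_transitive : ∀ e ∈ Γ.edgeSet, ∀ e' ∈ Γ.edgeSet, ∃ g ∈ G, Sym2.map (⇑g) e = e'
  vertex_transitive : ∀ u v : V, ∃ g ∈ G, g u = v

namespace IsAbelianTransitiveGroup

variable (hΓG : Γ.IsAbelianTransitiveGroup G) {σ : Equiv.Perm V} (hσ : σ ∈ G) {v : V}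
  (hv : Γ.Adj v (σ v))
include hΓG

theorem eq_of_apply_eq {g h : Equiv.Perm V} (hg : g ∈ G) (hh : h ∈ G) (hgh : g v = h v) : g = h :=
  Equiv.Perm.eq_of_apply_eq_of_comm_of_transitive hΓG.comm hΓG.vertex_transitive hg hh hgh

include hσ hv

theorem adj_apply_iff {g h : Equiv.Perm V} (hg : g ∈ G) (hh : h ∈ G) :
    Γ.Adj (g v) (h v) ↔ h = g * σ ∨ g = h * σ := by
  constructor
  · intro hgh
    obtain ⟨k, hk, hkv⟩ := hΓG.edge_transitive s(v, σ v) hv s(g v, h v) hgh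
    rw [Sym2.map_mk, Sym2.eq_iff] at hkv
    rcases hkv with ⟨hkg, hkh⟩ | ⟨hkh, hkg⟩
    · obtain rfl := hΓG.eq_of_apply_eq hk hg hkg
      exact Or.inl (hΓG.eq_of_apply_eq hh (mul_mem hk hσ) hkh.symm)
    · obtain rfl := hΓG.eq_of_apply_eq hk hh hkh
      exact Or.inr (hΓG.eq_of_apply_eq hg (mul_mem hk hσ) hkg.symm)
  · rintro (rfl | rfl)
    · exact (hΓG.adj_iff g hg v (σ v)).2 hv
    · exact ((hΓG.adj_iff h hh v (σ v)).2 hv).symm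

theorem eq_zpowers (hconn : Γ.Connected) : G = zpowers σ := by
  have horbit : ∀ u, ∃ k : ℤ, (σ ^ k) v = u := by
    refine hconn.preconnected.forall_mem_of_adj_mem (S := {u | ∃ k : ℤ, (σ ^ k) v = u})
      ⟨0, rfl⟩ ?_
    rintro _ w hadj ⟨k, rfl⟩
    obtain ⟨g, hg, rfl⟩ := hΓG.vertex_transitive v w
    rcases (hΓG.adj_apply_iff hσ hv (zpow_mem hσ k) hg).1 hadj with rfl | hk
    · exact ⟨k + 1, by rw [zpow_add_one]⟩
    · exact ⟨k - 1, by rw [zpow_sub_one, hk, mul_inv_cancel_right]⟩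
  refine le_antisymm (fun g hg ↦ ?_) (zpowers_le.2 hσ)
  obtain ⟨k, hk⟩ := horbit (g v)
  exact mem_zpowers_iff.2 ⟨k, hΓG.eq_of_apply_eq (zpow_mem hσ k) hg hk⟩

theorem nonempty_iso_cycleGraph [Fintype V] (horder : orderOf σ = Fintype.card V)
    (hV : 2 ≤ Fintype.card V) : Nonempty (Γ ≃g cycleGraph (Fintype.card V)) := by
  obtain ⟨n, hn⟩ := Nat.exists_eq_add_of_le' hV
  rw [hn] at horder ⊢
  let f : Fin (n + 2) → V := fun i ↦ (σ ^ (i : ℕ)) v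
  have hinj : f.Injective := fun i j hij ↦ Fin.ext <| pow_injOn_Iio_orderOf
    (by simp [horder]) (by simp [horder]) (hΓG.eq_of_apply_eq (pow_mem hσ _) (pow_mem hσ _) hij)
  have hbij : f.Bijective := (Fintype.bijective_iff_injective_and_card f).2 ⟨hinj, by simp [hn]⟩
  refine ⟨(RelIso.mk (Equiv.ofBijective f hbij) fun {i j} ↦ ?_).symm⟩
  simp only [Equiv.ofBijective_apply, f, cycleGraph_adj,
    hΓG.adj_apply_iff hσ hv (pow_mem hσ _) (pow_mem hσ _),
    eq_comm (a := σ ^ _), pow_val_mul_self_eq_pow_val_iff horder, sub_eq_iff_eq_add']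
  exact or_comm.trans (or_congr eq_comm eq_comm)

end IsAbelianTransitiveGroup

end SimpleGraph

/-- If `Γ` is a finite connected graph with more than one edge and
`G ≤ Aut(Γ)` is abelian, edge-transitive and vertex-transitive, then `Γ` is a cycle `C_n`
for some `n ≥ 3` and `G` is cyclic of order `n`. -/
theorem statement4 {V : Type*} [Fintype V] (Γ : SimpleGraph V)
    (hconn : Γ.Connected) (hE : 1 < Γ.edgeSet.ncard)
    (G : Subgroup (Equiv.Perm V))
    (hAut : ∀ g ∈ G, ∀ u v : V, Γ.Adj (g u) (g v) ↔ Γ.Adj u v)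
    (hab : ∀ a ∈ G, ∀ b ∈ G, a * b = b * a)
    (htrans : ∀ e ∈ Γ.edgeSet, ∀ e' ∈ Γ.edgeSet, ∃ g ∈ G, Sym2.map (⇑g) e = e')
    (hvtrans : ∀ u v : V, ∃ g ∈ G, g u = v) :
    ∃ n : ℕ, 3 ≤ n ∧ Nonempty (Γ ≃g SimpleGraph.cycleGraph n) ∧
      IsCyclic G ∧ Nat.card G = n := by
  obtain ⟨v⟩ := hconn.nonempty
  have hV := three_le_card_of_one_lt_ncard_edgeSet hE
  obtain ⟨σ, hσ, hv⟩ :=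
    exists_mem_adj_apply hAut hvtrans (Set.nonempty_of_ncard_ne_zero (by omega)) v
  have hΓG : Γ.IsAbelianTransitiveGroup G := ⟨hAut, hab, htrans, hvtrans⟩
  have hG := hΓG.eq_zpowers hσ hv hconn
  have hcard : Nat.card G = Fintype.card V := by
    rw [Equiv.Perm.natCard_eq_of_comm_of_transitive hab hvtrans v, Nat.card_eq_fintype_card]
  have horder : orderOf σ = Fintype.card V := by rw [← hcard, hG, Nat.card_zpowers]
  refine ⟨Fintype.card V, hV, hΓG.nonempty_iso_cycleGraph hσ hv horder (by omega), ?_, hcard⟩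
  rw [hG]
  infer_instance
end

section
/- Let Γ be a finite connected graph with more than one edge, and suppose G ≤ Aut(Γ) is abelian and edge-transitive with exactly two orbits on vertices. Then Γ is a complete bipartite graph K_{m,n} whose biparts Δ and Σ are the two G-orbits (of sizes m and n), and G = M × N where M = G_v fixes Σ pointwise and is regular on Δ, and N = G_u fixes Δ pointwise and is regular on Σ, for u ∈ Δ, v ∈ Σ. -/
/-!
Every vertex has a neighbour, and edge-transitivity carries any edge onto one at `u` and onto
one at `v`, so each edge joins the two orbits: `Γ` is bipartite with parts `u^G` and `v^G`.
In an abelian group the stabiliser of a point fixes its whole orbit. So if `g` carries the edge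
`yx` to `ax`, then `g` fixes `x`, hence every `b` on the side of `x`, and `y ~ b` gives `a ~ b`:
every walk of length three closes to an edge, which in a connected bipartite graph forces
completeness. An element fixing `u` and `v` fixes everything, which gives the regularity of
`G_v` on `u^G` and of `G_u` on `v^G`, and then `G = G_v × G_u`.
-/

open MulAction

namespace SimpleGraph

variable {V : Type*} {Γ : SimpleGraph V}

theorem Walk.adj_of_odd_length
    (h3 : ∀ a x y b, Γ.Adj a x → Γ.Adj x y → Γ.Adj y b → Γ.Adj a b)
    {a b : V} (p : Γ.Walk a b) (hp : Odd p.length) : Γ.Adj a b := by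
  suffices (Even p.length → ∀ y, Γ.Adj y a ↔ Γ.Adj y b) ∧ (Odd p.length → Γ.Adj a b) from
    this.2 hp
  clear hp
  induction p with
  | nil => simp
  | cons hax q ih =>
    rw [length_cons, Nat.even_add_one, Nat.odd_add_one, Nat.not_even_iff_odd,
      Nat.not_odd_iff_even]
    refine ⟨fun hq y => ⟨fun hya => h3 _ _ _ _ hya hax (ih.2 hq),
      fun hyb => h3 _ _ _ _ hyb (ih.2 hq).symm hax.symm⟩, fun hq => (ih.1 hq _).1 hax⟩

theorem Connected.adj_of_mem_of_notMem (hconn : Γ.Connected)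
    (h3 : ∀ a x y b, Γ.Adj a x → Γ.Adj x y → Γ.Adj y b → Γ.Adj a b)
    {S : Set V} (hS : ∀ a b, Γ.Adj a b → (a ∈ S ↔ b ∉ S)) {a b : V} (ha : a ∈ S) (hb : b ∉ S) :
    Γ.Adj a b := by
  classical
  let c : Γ.Coloring Bool := Coloring.mk (fun w => decide (w ∈ S)) fun h => by simp [hS _ _ h]
  obtain ⟨p⟩ := hconn.preconnected a b
  refine p.adj_of_odd_length h3 ((c.odd_length_iff_not_congr p).2 ?_)
  change ¬decide (a ∈ S) = true ↔ decide (b ∈ S) = true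
  simp [ha, hb]

def IsEdgeTransitive (H : Type*) [Group H] [MulAction H V] (Γ : SimpleGraph V) : Prop :=
  ∀ e ∈ Γ.edgeSet, ∀ e' ∈ Γ.edgeSet, ∃ g : H, e.map (g • ·) = e'

end SimpleGraph

namespace MulAction

variable {H V : Type*} [Group H] [MulAction H V]

theorem smul_eq_self_of_mem_orbit [IsMulCommutative H] {g : H} {x y : V} (hx : g • x = x)
    (hy : y ∈ orbit H x) : g • y = y := by
  obtain ⟨k, rfl⟩ := hy
  rw [← mul_smul, mul_comm', mul_smul, hx]

theorem mem_orbit_congr {x y z : V} (h : y ∈ orbit H x) : y ∈ orbit H z ↔ x ∈ orbit H z := by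
  rw [← orbit_eq_iff, ← orbit_eq_iff, orbit_eq_iff.2 h]

theorem eq_of_smul_eq_of_smul_eq [IsMulCommutative H] [FaithfulSMul H V] {u v : V}
    (horb : ∀ w, w ∈ orbit H u ∨ w ∈ orbit H v) {g g' : H} (hu : g • u = g' • u)
    (hv : g • v = g' • v) : g = g' := by
  refine eq_of_smul_eq_smul (α := V) fun w => ?_
  have hfix : ∀ x : V, g • x = g' • x → ∀ y ∈ orbit H x, g • y = g' • y := by
    intro x hx y hy
    have := smul_eq_self_of_mem_orbit (g := g'⁻¹ * g) (by rwa [mul_smul, inv_smul_eq_iff]) hy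
    rwa [mul_smul, inv_smul_eq_iff] at this
  rcases horb w with hw | hw
  exacts [hfix u hu w hw, hfix v hv w hw]

theorem existsUnique_mul_eq {u v : V}
    (hreg : ∀ w ∈ orbit H u, ∃! m : H, m • v = v ∧ m • u = w) (g : H) :
    ∃! p : H × H, p.1 • v = v ∧ p.2 • u = u ∧ g = p.1 * p.2 := by
  obtain ⟨m, ⟨hmv, hmu⟩, hm⟩ := hreg (g • u) (mem_orbit _ _)
  refine ⟨(m, m⁻¹ * g), ⟨hmv, by rw [mul_smul, inv_smul_eq_iff, hmu], by group⟩, ?_⟩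
  rintro ⟨p₁, p₂⟩ ⟨hp₁, hp₂, rfl⟩
  obtain rfl : p₁ = m := hm p₁ ⟨hp₁, by rw [mul_smul, hp₂]⟩
  simp

theorem mem_orbit_iff_notMem_orbit {u v : V} (huv : v ∉ orbit H u)
    (horb : ∀ w, w ∈ orbit H u ∨ w ∈ orbit H v) (w : V) : w ∈ orbit H v ↔ w ∉ orbit H u :=
  ⟨fun hw hw' => huv ((mem_orbit_congr (mem_orbit_symm.1 hw)).2 hw'), (horb w).resolve_left⟩

theorem mem_orbit_of_mem_orbit_iff {u v : V} (huv : v ∉ orbit H u)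
    (horb : ∀ w, w ∈ orbit H u ∨ w ∈ orbit H v) {x y : V}
    (h : x ∈ orbit H u ↔ y ∈ orbit H u) : y ∈ orbit H x := by
  simp only [← orbit_eq_iff] at *
  rcases horb x with hx | hx <;> rcases horb y with hy | hy <;> grind

end MulAction

namespace SimpleGraph

variable {H V : Type*} [Group H] [MulAction H V] {Γ : SimpleGraph V}

theorem IsEdgeTransitive.exists_smul_eq (ht : Γ.IsEdgeTransitive H) {a b a' b' : V}
    (h : Γ.Adj a b) (h' : Γ.Adj a' b') :
    ∃ g : H, g • a = a' ∧ g • b = b' ∨ g • a = b' ∧ g • b = a' := by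
  obtain ⟨g, hg⟩ := ht s(a, b) h s(a', b') h'
  exact ⟨g, by simpa only [Sym2.map_mk, Sym2.eq_iff] using hg⟩

theorem IsEdgeTransitive.mem_orbit_or_mem_orbit (ht : Γ.IsEdgeTransitive H) {u c a b : V}
    (hu : Γ.Adj u c) (h : Γ.Adj a b) : a ∈ orbit H u ∨ b ∈ orbit H u := by
  obtain ⟨g, ⟨hga, -⟩ | ⟨-, hgb⟩⟩ := ht.exists_smul_eq h hu
  · exact .inl (hga ▸ mem_orbit_smul g a)
  · exact .inr (hgb ▸ mem_orbit_smul g b)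

theorem IsEdgeTransitive.adj_of_adj_of_adj_of_adj [IsMulCommutative H]
    (ht : Γ.IsEdgeTransitive H) (hAut : ∀ (g : H) a b, Γ.Adj (g • a) (g • b) ↔ Γ.Adj a b)
    (hno : ∀ a b, Γ.Adj a b → b ∉ orbit H a) {a x y b : V} (hax : Γ.Adj a x)
    (hxy : Γ.Adj x y) (hyb : Γ.Adj y b) (hb : b ∈ orbit H x) : Γ.Adj a b := by
  obtain ⟨g, ⟨hgy, hgx⟩ | ⟨hgy, -⟩⟩ := ht.exists_smul_eq hxy.symm hax
  · rwa [← hgy, ← smul_eq_self_of_mem_orbit hgx hb, hAut]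
  · exact absurd (hgy ▸ mem_orbit y g) (hno _ _ hxy.symm)

theorem IsEdgeTransitive.adj_iff_mem_orbit_iff_notMem [IsMulCommutative H] (hconn : Γ.Connected)
    (ht : Γ.IsEdgeTransitive H) (hAut : ∀ (g : H) a b, Γ.Adj (g • a) (g • b) ↔ Γ.Adj a b)
    {u v : V} (huv : v ∉ orbit H u) (horb : ∀ w, w ∈ orbit H u ∨ w ∈ orbit H v) {a b : V} :
    Γ.Adj a b ↔ (a ∈ orbit H u ↔ b ∉ orbit H u) := by
  have : Nontrivial V := ⟨u, v, fun h => huv (h ▸ mem_orbit_self u)⟩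
  obtain ⟨c, hc⟩ := hconn.preconnected.exists_adj_of_nontrivial u
  obtain ⟨d, hd⟩ := hconn.preconnected.exists_adj_of_nontrivial v
  have hS : ∀ a b, Γ.Adj a b → (a ∈ orbit H u ↔ b ∉ orbit H u) := by
    intro a b h
    have := ht.mem_orbit_or_mem_orbit hc h
    have := ht.mem_orbit_or_mem_orbit hd h
    rw [mem_orbit_iff_notMem_orbit huv horb, mem_orbit_iff_notMem_orbit huv horb] at this
    tauto
  have h3 : ∀ a x y b, Γ.Adj a x → Γ.Adj x y → Γ.Adj y b → Γ.Adj a b := by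
    intro a x y b hax hxy hyb
    refine ht.adj_of_adj_of_adj_of_adj hAut (fun a b h hb => ?_) hax hxy hyb
      (mem_orbit_of_mem_orbit_iff huv horb ?_)
    · have := mem_orbit_congr (z := u) hb
      have := hS a b h
      tauto
    · have := hS x y hxy
      have := hS y b hyb
      tauto
  refine ⟨hS a b, fun h => ?_⟩
  by_cases ha : a ∈ orbit H u
  · exact hconn.adj_of_mem_of_notMem h3 hS ha (h.1 ha)
  · exact (hconn.adj_of_mem_of_notMem h3 hS (not_not.1 (mt h.2 ha)) ha).symm

theorem IsEdgeTransitive.existsUnique_smul_eq [IsMulCommutative H] [FaithfulSMul H V]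
    (ht : Γ.IsEdgeTransitive H) {u v : V} (huv : v ∉ orbit H u)
    (horb : ∀ w, w ∈ orbit H u ∨ w ∈ orbit H v) (hadj : ∀ w ∈ orbit H u, Γ.Adj w v)
    {w w' : V} (hw : w ∈ orbit H u) (hw' : w' ∈ orbit H u) :
    ∃! g : H, g • v = v ∧ g • w = w' := by
  obtain ⟨g, ⟨hgw, hgv⟩ | ⟨hgw, -⟩⟩ := ht.exists_smul_eq (hadj w hw) (hadj w' hw')
  · refine ⟨g, ⟨hgv, hgw⟩, fun g' ⟨hg'v, hg'w⟩ => ?_⟩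
    have horb' : ∀ z, z ∈ orbit H w ∨ z ∈ orbit H v := by rwa [orbit_eq_iff.2 hw]
    exact eq_of_smul_eq_of_smul_eq horb' (hg'w.trans hgw.symm) (hg'v.trans hgv.symm)
  · exact absurd (hgw ▸ (mem_orbit_congr (mem_orbit w g)).2 hw) huv

end SimpleGraph

theorem Subgroup.existsUnique_mem_of_existsUnique {M : Type*} [Group M] {G : Subgroup M}
    {p : M → Prop} (h : ∃! g : G, p g) : ∃! g : M, g ∈ G ∧ p g := by
  obtain ⟨⟨g, hg⟩, hp, huniq⟩ := h
  exact ⟨g, ⟨hg, hp⟩, fun g' ⟨hg', hp'⟩ => congrArg Subtype.val (huniq ⟨g', hg'⟩ hp')⟩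

theorem Subgroup.existsUnique_prod_mem_of_existsUnique {M : Type*} [Group M] {G : Subgroup M}
    {p q : M → Prop} {g : G} (h : ∃! x : G × G, p x.1 ∧ q x.2 ∧ g = x.1 * x.2) :
    ∃! x : M × M, (x.1 ∈ G ∧ p x.1) ∧ (x.2 ∈ G ∧ q x.2) ∧ (g : M) = x.1 * x.2 := by
  obtain ⟨⟨⟨m, hm⟩, ⟨n, hn⟩⟩, ⟨hp, hq, rfl⟩, huniq⟩ := h
  refine ⟨(m, n), ⟨⟨hm, hp⟩, ⟨hn, hq⟩, rfl⟩, ?_⟩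
  rintro ⟨m', n'⟩ ⟨⟨hm', hp'⟩, ⟨hn', hq'⟩, he⟩
  simpa using huniq (⟨m', hm'⟩, ⟨n', hn'⟩) ⟨hp', hq', Subtype.ext he⟩

theorem Subgroup.mem_orbit_iff_exists_perm {V : Type*} {G : Subgroup (Equiv.Perm V)} {u w : V} :
    w ∈ orbit G u ↔ ∃ g ∈ G, g u = w := by
  simp [mem_orbit_iff]

theorem statement5_general {V : Type*} (Γ : SimpleGraph V)
    (hconn : Γ.Connected)
    (G : Subgroup (Equiv.Perm V))
    (hAut : ∀ g ∈ G, ∀ u v : V, Γ.Adj (g u) (g v) ↔ Γ.Adj u v)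
    (hab : ∀ a ∈ G, ∀ b ∈ G, a * b = b * a)
    (htrans : ∀ e ∈ Γ.edgeSet, ∀ e' ∈ Γ.edgeSet, ∃ g ∈ G, Sym2.map (⇑g) e = e')
    (u v : V) (huv : ¬ ∃ g ∈ G, g u = v)
    (horb : ∀ w : V, (∃ g ∈ G, g u = w) ∨ (∃ g ∈ G, g v = w)) :
    -- Γ is complete bipartite with biparts the two orbits
    (∀ a b : V, Γ.Adj a b ↔
      (((∃ g ∈ G, g u = a) ∧ (∃ g ∈ G, g v = b)) ∨
       ((∃ g ∈ G, g v = a) ∧ (∃ g ∈ G, g u = b)))) ∧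
    -- M = G_v fixes Σ' = v^G pointwise
    (∀ g ∈ G, g v = v → ∀ w : V, (∃ g' ∈ G, g' v = w) → g w = w) ∧
    -- M = G_v is regular on Δ = u^G
    (∀ w w' : V, (∃ g ∈ G, g u = w) → (∃ g ∈ G, g u = w') →
      ∃! g : Equiv.Perm V, g ∈ G ∧ g v = v ∧ g w = w') ∧
    -- N = G_u fixes Δ = u^G pointwise
    (∀ g ∈ G, g u = u → ∀ w : V, (∃ g' ∈ G, g' u = w) → g w = w) ∧
    -- N = G_u is regular on Σ' = v^G
    (∀ w w' : V, (∃ g ∈ G, g v = w) → (∃ g ∈ G, g v = w') →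
      ∃! g : Equiv.Perm V, g ∈ G ∧ g u = u ∧ g w = w') ∧
    -- G = M × N (internal direct product)
    (∀ g ∈ G, ∃! p : Equiv.Perm V × Equiv.Perm V,
      (p.1 ∈ G ∧ p.1 v = v) ∧ (p.2 ∈ G ∧ p.2 u = u) ∧ g = p.1 * p.2) := by
  have : IsMulCommutative G := .of_comm fun a b => Subtype.ext (hab a a.2 b b.2)
  have ht : Γ.IsEdgeTransitive G := fun e he e' he' =>
    let ⟨g, hg, hge⟩ := htrans e he e' he'
    ⟨⟨g, hg⟩, hge⟩
  have hAut' : ∀ (g : G) a b, Γ.Adj (g • a) (g • b) ↔ Γ.Adj a b := fun g => hAut g g.2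
  simp only [← Subgroup.mem_orbit_iff_exists_perm] at huv horb ⊢
  have hvu : u ∉ orbit G v := fun h => huv (mem_orbit_symm.1 h)
  have horb' : ∀ w, w ∈ orbit G v ∨ w ∈ orbit G u := fun w => (horb w).symm
  have hbip : ∀ a b, Γ.Adj a b ↔ (a ∈ orbit G u ↔ b ∉ orbit G u) := fun a b =>
    ht.adj_iff_mem_orbit_iff_notMem hconn hAut' huv horb
  have hregM : ∀ w w', w ∈ orbit G u → w' ∈ orbit G u → ∃! g : G, g • v = v ∧ g • w = w' :=
    fun w w' => ht.existsUnique_smul_eq huv horb fun w hw => (hbip w v).2 (iff_of_true hw huv)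
  have hregN : ∀ w w', w ∈ orbit G v → w' ∈ orbit G v → ∃! g : G, g • u = u ∧ g • w = w' :=
    fun w w' => ht.existsUnique_smul_eq hvu horb' fun w hw => (hbip w u).2
      (iff_of_false ((mem_orbit_iff_notMem_orbit huv horb w).1 hw) (not_not.2 (mem_orbit_self u)))
  refine ⟨fun a b => ?_, fun g hg hgv w => smul_eq_self_of_mem_orbit (g := (⟨g, hg⟩ : G)) hgv,
    fun w w' hw hw' => Subgroup.existsUnique_mem_of_existsUnique (hregM w w' hw hw'),
    fun g hg hgu w => smul_eq_self_of_mem_orbit (g := (⟨g, hg⟩ : G)) hgu,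
    fun w w' hw hw' => Subgroup.existsUnique_mem_of_existsUnique (hregN w w' hw hw'),
    fun g hg => Subgroup.existsUnique_prod_mem_of_existsUnique (g := ⟨g, hg⟩)
      (p := (· v = v)) (q := (· u = u))
      (existsUnique_mul_eq (fun w hw => hregM u w (mem_orbit_self u) hw) _)⟩
  rw [hbip, mem_orbit_iff_notMem_orbit huv horb a, mem_orbit_iff_notMem_orbit huv horb b]
  tauto

/-- If `Γ` is a finite connected graph with more than one edge, and
`G ≤ Aut(Γ)` is abelian, edge-transitive, with exactly two vertex-orbits `Δ = u^G` and
`Σ' = v^G`, then `Γ` is the complete bipartite graph with biparts `Δ` and `Σ'`, and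
`G = M × N` where `M = G_v` fixes `Σ'` pointwise and is regular on `Δ`, and `N = G_u`
fixes `Δ` pointwise and is regular on `Σ'`. -/
theorem statement5 {V : Type*} [Fintype V] (Γ : SimpleGraph V)
    (hconn : Γ.Connected) (hE : 1 < Γ.edgeSet.ncard)
    (G : Subgroup (Equiv.Perm V))
    (hAut : ∀ g ∈ G, ∀ u v : V, Γ.Adj (g u) (g v) ↔ Γ.Adj u v)
    (hab : ∀ a ∈ G, ∀ b ∈ G, a * b = b * a)
    (htrans : ∀ e ∈ Γ.edgeSet, ∀ e' ∈ Γ.edgeSet, ∃ g ∈ G, Sym2.map (⇑g) e = e')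
    (u v : V) (huv : ¬ ∃ g ∈ G, g u = v)
    (horb : ∀ w : V, (∃ g ∈ G, g u = w) ∨ (∃ g ∈ G, g v = w)) :
    -- Γ is complete bipartite with biparts the two orbits
    (∀ a b : V, Γ.Adj a b ↔
      (((∃ g ∈ G, g u = a) ∧ (∃ g ∈ G, g v = b)) ∨
       ((∃ g ∈ G, g v = a) ∧ (∃ g ∈ G, g u = b)))) ∧
    -- M = G_v fixes Σ' = v^G pointwise
    (∀ g ∈ G, g v = v → ∀ w : V, (∃ g' ∈ G, g' v = w) → g w = w) ∧
    -- M = G_v is regular on Δ = u^G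
    (∀ w w' : V, (∃ g ∈ G, g u = w) → (∃ g ∈ G, g u = w') →
      ∃! g : Equiv.Perm V, g ∈ G ∧ g v = v ∧ g w = w') ∧
    -- N = G_u fixes Δ = u^G pointwise
    (∀ g ∈ G, g u = u → ∀ w : V, (∃ g' ∈ G, g' u = w) → g w = w) ∧
    -- N = G_u is regular on Σ' = v^G
    (∀ w w' : V, (∃ g ∈ G, g v = w) → (∃ g ∈ G, g v = w') →
      ∃! g : Equiv.Perm V, g ∈ G ∧ g u = u ∧ g w = w') ∧
    -- G = M × N (internal direct product)
    (∀ g ∈ G, ∃! p : Equiv.Perm V × Equiv.Perm V,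
      (p.1 ∈ G ∧ p.1 v = v) ∧ (p.2 ∈ G ∧ p.2 u = u) ∧ g = p.1 * p.2) :=
  statement5_general Γ hconn G hAut hab htrans u v huv horb
end

section
/- In the group I(n) (n ≥ 2), the derived subgroup I(n)' equals the subgroup X ⊗ Y (the set of elements of the form 0+0+A), and this subgroup coincides with the center Z(I(n)). -/
open TensorProduct

/-- `X = F_2^n`, the `n`-dimensional vector space over `F_2`. -/
abbrev Vn (n : ℕ) := Fin n → ZMod 2

/-- The tensor product `X ⊗ Y` over `F_2`. -/
abbrev Tn (n : ℕ) := TensorProduct (ZMod 2) (Vn n) (Vn n)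

/-- The underlying set `X ⊕ Y ⊕ (X ⊗ Y)` of the group `I(n)` of
Definition `concreteConstruction`. -/
def ICarrier (n : ℕ) := Vn n × Vn n × Tn n

lemma char2_add_self {M : Type*} [AddCommGroup M] [Module (ZMod 2) M] (a : M) :
    a + a = 0 := by
  have h : (2 : ZMod 2) • a = a + a := two_smul _ a
  rw [show (2 : ZMod 2) = 0 by decide, zero_smul] at h
  exact h.symm

namespace ICarrier

variable {n : ℕ}

noncomputable instance : AddCommGroup (ICarrier n) :=
  inferInstanceAs (AddCommGroup (Vn n × Vn n × Tn n))

noncomputable instance : Module (ZMod 2) (ICarrier n) :=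
  inferInstanceAs (Module (ZMod 2) (Vn n × Vn n × Tn n))

/-- The element `x + y + A` of `I(n)`. -/
def mk (x y : Vn n) (A : Tn n) : ICarrier n := (x, y, A)

/-- The `X`-component of an element of `I(n)`. -/
def x (p : ICarrier n) : Vn n := Prod.fst p

/-- The `Y`-component of an element of `I(n)`. -/
def y (p : ICarrier n) : Vn n := (Prod.snd p).1

/-- The `X ⊗ Y`-component of an element of `I(n)`. -/
def A (p : ICarrier n) : Tn n := (Prod.snd p).2

@[ext] lemma ext {p q : ICarrier n} (h1 : p.x = q.x) (h2 : p.y = q.y)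
    (h3 : p.A = q.A) : p = q :=
  Prod.ext h1 (Prod.ext h2 h3)

@[simp] lemma x_add (p q : ICarrier n) : (p + q).x = p.x + q.x := rfl
@[simp] lemma y_add (p q : ICarrier n) : (p + q).y = p.y + q.y := rfl
@[simp] lemma A_add (p q : ICarrier n) : (p + q).A = p.A + q.A := rfl
@[simp] lemma x_mk (a b : Vn n) (c : Tn n) : (mk a b c).x = a := rfl
@[simp] lemma y_mk (a b : Vn n) (c : Tn n) : (mk a b c).y = b := rfl
@[simp] lemma A_mk (a b : Vn n) (c : Tn n) : (mk a b c).A = c := rfl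
@[simp] lemma x_zero : (0 : ICarrier n).x = 0 := rfl
@[simp] lemma y_zero : (0 : ICarrier n).y = 0 := rfl
@[simp] lemma A_zero : (0 : ICarrier n).A = 0 := rfl

/-- Multiplication in `I(n)`: `g₁g₂ = g₁ + g₂ + x₂ ⊗ y₁` (Equation `eqnMultiplication`). -/
noncomputable instance : Mul (ICarrier n) :=
  ⟨fun p q => p + q + mk 0 0 (q.x ⊗ₜ[ZMod 2] p.y)⟩

noncomputable instance : One (ICarrier n) := ⟨(0 : ICarrier n)⟩

/-- Inversion in `I(n)`: `g⁻¹ = g + x ⊗ y` (Equation `eqnInverse`). -/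
noncomputable instance : Inv (ICarrier n) :=
  ⟨fun p => p + mk 0 0 (p.x ⊗ₜ[ZMod 2] p.y)⟩

lemma mul_def (p q : ICarrier n) :
    p * q = p + q + mk 0 0 (q.x ⊗ₜ[ZMod 2] p.y) := rfl

lemma one_def : (1 : ICarrier n) = 0 := rfl

lemma inv_def (p : ICarrier n) :
    p⁻¹ = p + mk 0 0 (p.x ⊗ₜ[ZMod 2] p.y) := rfl

@[simp] lemma x_mul (p q : ICarrier n) : (p * q).x = p.x + q.x := by
  show p.x + q.x + 0 = _; rw [add_zero]
@[simp] lemma y_mul (p q : ICarrier n) : (p * q).y = p.y + q.y := by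
  show p.y + q.y + 0 = _; rw [add_zero]
@[simp] lemma A_mul (p q : ICarrier n) :
    (p * q).A = p.A + q.A + q.x ⊗ₜ[ZMod 2] p.y := rfl

@[simp] lemma x_inv (p : ICarrier n) : (p⁻¹).x = p.x := by
  show p.x + 0 = _; rw [add_zero]
@[simp] lemma y_inv (p : ICarrier n) : (p⁻¹).y = p.y := by
  show p.y + 0 = _; rw [add_zero]
@[simp] lemma A_inv (p : ICarrier n) :
    (p⁻¹).A = p.A + p.x ⊗ₜ[ZMod 2] p.y := rfl

noncomputable instance : Group (ICarrier n) :=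
  Group.ofLeftAxioms
    (fun p q r => by
      apply ext <;>
        simp [TensorProduct.add_tmul, TensorProduct.tmul_add] <;> abel)
    (fun p => by
      apply ext <;> simp [one_def, TensorProduct.tmul_zero])
    (fun p => by
      apply ext
      · simp [one_def, char2_add_self]
      · simp [one_def, char2_add_self]
      · simp only [A_mul, A_inv, y_inv, one_def, A_zero]
        calc p.A + p.x ⊗ₜ[ZMod 2] p.y + p.A + p.x ⊗ₜ[ZMod 2] p.y
            = (p.A + p.A) + (p.x ⊗ₜ[ZMod 2] p.y + p.x ⊗ₜ[ZMod 2] p.y) := by abel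
          _ = 0 := by rw [char2_add_self, char2_add_self, add_zero])

end ICarrier


/-!
The projection `x + y + A ↦ (x, y)` is a homomorphism onto the abelian group `X × Y`, so the
derived subgroup lies in its kernel `X ⊗ Y`; conversely the commutator of `a + 0 + 0` and
`0 + b + 0` is `0 + 0 + a ⊗ b`, and pure tensors generate `X ⊗ Y`. An element `g` is central
exactly when `x_h ⊗ y_g = x_g ⊗ y_h` for all `h`; taking `h` to be a basis vector of `X` or of `Y`
and contracting against the dual basis vector forces `x_g = y_g = 0`.
-/

section TensorContraction

variable {R M N : Type*} [CommRing R] [AddCommGroup M] [Module R M] [AddCommGroup N]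
  [Module R N]

theorem TensorProduct.eq_zero_of_tmul_eq_zero_left {m : M} {v : N} (f : N →ₗ[R] R)
    (hv : f v = 1) (h : m ⊗ₜ[R] v = 0) : m = 0 := by
  simpa [hv] using congrArg ((TensorProduct.rid R M).toLinearMap ∘ₗ f.lTensor M) h

theorem TensorProduct.eq_zero_of_tmul_eq_zero_right {m : M} {v : N} (f : M →ₗ[R] R)
    (hm : f m = 1) (h : m ⊗ₜ[R] v = 0) : v = 0 := by
  simpa [hm] using congrArg ((TensorProduct.lid R N).toLinearMap ∘ₗ f.rTensor N) h

end TensorContraction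

namespace ICarrier

variable {n : ℕ}

noncomputable def toProd : ICarrier n →* Multiplicative (Vn n × Vn n) where
  toFun p := Multiplicative.ofAdd (p.x, p.y)
  map_one' := rfl
  map_mul' p q := by simp only [x_mul, y_mul]; rfl

theorem mem_ker_toProd {p : ICarrier n} : p ∈ toProd.ker ↔ p.x = 0 ∧ p.y = 0 := by
  change Multiplicative.ofAdd (p.x, p.y) = Multiplicative.ofAdd 0 ↔ _
  rw [Multiplicative.ofAdd.injective.eq_iff, Prod.mk_eq_zero]

theorem mk_zero_zero_add (A B : Tn n) : mk 0 0 (A + B) = mk 0 0 A * mk 0 0 B := by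
  ext <;> simp

open scoped commutatorElement in
theorem commutatorElement_mk (a b : Vn n) :
    ⁅mk a 0 (0 : Tn n), mk 0 b 0⁆ = mk 0 0 (a ⊗ₜ[ZMod 2] b) := by
  ext <;> simp [commutatorElement_def, char2_add_self]

theorem commutator_eq_ker_toProd : commutator (ICarrier n) = toProd.ker := by
  refine le_antisymm (Abelianization.commutator_subset_ker _) fun p hp => ?_
  obtain ⟨hx, hy⟩ := mem_ker_toProd.mp hp
  rw [show p = mk 0 0 p.A from ext hx hy rfl]
  induction p.A using TensorProduct.induction_on with
  | zero => exact Subgroup.one_mem _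
  | tmul a b =>
    rw [← commutatorElement_mk]
    exact Subgroup.commutator_mem_commutator (Subgroup.mem_top _) (Subgroup.mem_top _)
  | add A B hA hB =>
    rw [mk_zero_zero_add]
    exact Subgroup.mul_mem _ hA hB

theorem mem_center_iff_tmul_eq {p : ICarrier n} :
    p ∈ Subgroup.center (ICarrier n) ↔ ∀ g : ICarrier n, g.x ⊗ₜ[ZMod 2] p.y = p.x ⊗ₜ g.y := by
  rw [Subgroup.mem_center_iff]
  refine forall_congr' fun g => ⟨fun h => ?_, fun h => ?_⟩
  · have hA := congrArg A h
    simp only [A_mul] at hA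
    rw [add_comm p.A g.A] at hA
    exact (add_left_cancel hA).symm
  · ext
    · simp [add_comm]
    · simp [add_comm]
    · simp [h, add_comm]

theorem center_eq_ker_toProd : Subgroup.center (ICarrier n) = toProd.ker := by
  ext p
  rw [mem_center_iff_tmul_eq, mem_ker_toProd]
  refine ⟨fun h => ⟨funext fun i => ?_, funext fun i => ?_⟩, fun ⟨hx, hy⟩ g => by simp [hx, hy]⟩
  · have h' := h (mk 0 (Pi.single i 1) 0)
    simp only [x_mk, y_mk, TensorProduct.zero_tmul] at h'
    exact congrFun
      (TensorProduct.eq_zero_of_tmul_eq_zero_left (LinearMap.proj i) (by simp) h'.symm) i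
  · have h' := h (mk (Pi.single i 1) 0 0)
    simp only [x_mk, y_mk, TensorProduct.tmul_zero] at h'
    exact congrFun
      (TensorProduct.eq_zero_of_tmul_eq_zero_right (LinearMap.proj i) (by simp) h') i

end ICarrier

theorem statement8_general (n : ℕ) :
    ((commutator (ICarrier n) : Set (ICarrier n)) =
      {p : ICarrier n | p.x = 0 ∧ p.y = 0}) ∧
    commutator (ICarrier n) = Subgroup.center (ICarrier n) := by
  rw [ICarrier.commutator_eq_ker_toProd, ICarrier.center_eq_ker_toProd]
  exact ⟨Set.ext fun _ => ICarrier.mem_ker_toProd, rfl⟩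

/-- In `I(n)` (`n ≥ 2`), the derived subgroup equals the subgroup
`X ⊗ Y = {0+0+A}`, and this subgroup coincides with the centre `Z(I(n))`. -/
theorem statement8 (n : ℕ) (hn : 2 ≤ n) :
    ((commutator (ICarrier n) : Set (ICarrier n)) =
      {p : ICarrier n | p.x = 0 ∧ p.y = 0}) ∧
    commutator (ICarrier n) = Subgroup.center (ICarrier n) :=
  statement8_general n
end

section
/- For n ≥ 2, the group I(n) is an n-dimensional mixed dihedral group relative to X and Y: X and Y are subgroups isomorphic to C_2^n, I(n) = ⟨X, Y⟩, and I(n)/I(n)' ≅ C_2^{2n}. -/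
open TensorProduct

/-- The subgroup `X = {x+0+0}` of `I(n)`. -/
noncomputable def XSub (n : ℕ) : Subgroup (ICarrier n) where
  carrier := {p | p.y = 0 ∧ p.A = 0}
  mul_mem' := by
    rintro p q ⟨h1, h2⟩ ⟨h3, h4⟩
    constructor <;>
      simp [h1, h2, h3, h4, TensorProduct.tmul_zero]
  one_mem' := by
    constructor <;> simp [ICarrier.one_def]
  inv_mem' := by
    rintro p ⟨h1, h2⟩
    constructor <;> simp [h1, h2, TensorProduct.tmul_zero]

/-- The subgroup `Y = {0+y+0}` of `I(n)`. -/
noncomputable def YSub (n : ℕ) : Subgroup (ICarrier n) where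
  carrier := {p | p.x = 0 ∧ p.A = 0}
  mul_mem' := by
    rintro p q ⟨h1, h2⟩ ⟨h3, h4⟩
    constructor <;>
      simp [h1, h2, h3, h4, TensorProduct.zero_tmul]
  one_mem' := by
    constructor <;> simp [ICarrier.one_def]
  inv_mem' := by
    rintro p ⟨h1, h2⟩
    constructor <;> simp [h1, h2, TensorProduct.zero_tmul]

/-! The projection `x + y + A ↦ (x, y)` is a homomorphism onto `X ⊕ Y`, and a pure tensor
`x ⊗ y` is the commutator `[y, x]` of an element of `Y` with one of `X`. Since pure tensors
span `X ⊗ Y`, the subgroup `X ⊗ Y` lies in both `⟨X, Y⟩` and `I(n)'`; hence `⟨X, Y⟩ = I(n)`,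
and `I(n)'` is exactly the kernel `X ⊗ Y` of the projection, so `I(n)/I(n)' ≅ X ⊕ Y`. -/

namespace ICarrier

variable {n : ℕ}

noncomputable def ofX : Multiplicative (Vn n) →* ICarrier n where
  toFun a := mk a.toAdd 0 0
  map_one' := rfl
  map_mul' a b := by ext <;> simp [tmul_zero]

noncomputable def ofY : Multiplicative (Vn n) →* ICarrier n where
  toFun b := mk 0 b.toAdd 0
  map_one' := rfl
  map_mul' a b := by ext <;> simp [zero_tmul]

noncomputable def ofTensor : Multiplicative (Tn n) →* ICarrier n where
  toFun A := mk 0 0 A.toAdd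
  map_one' := rfl
  map_mul' A B := by ext <;> simp

@[simp] lemma ofX_apply (a : Multiplicative (Vn n)) : ofX a = mk a.toAdd 0 0 := rfl

@[simp] lemma ofY_apply (b : Multiplicative (Vn n)) : ofY b = mk 0 b.toAdd 0 := rfl

@[simp] lemma ofTensor_apply (A : Multiplicative (Tn n)) : ofTensor A = mk 0 0 A.toAdd := rfl

lemma ofX_injective : Function.Injective (ofX : Multiplicative (Vn n) →* ICarrier n) :=
  fun _ _ h => congrArg (fun p : ICarrier n => Multiplicative.ofAdd p.x) h

lemma ofY_injective : Function.Injective (ofY : Multiplicative (Vn n) →* ICarrier n) :=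
  fun _ _ h => congrArg (fun p : ICarrier n => Multiplicative.ofAdd p.y) h

lemma range_ofX : (ofX : Multiplicative (Vn n) →* ICarrier n).range = XSub n := by
  ext p
  refine ⟨?_, fun hp => ⟨.ofAdd p.x, ext rfl hp.1.symm hp.2.symm⟩⟩
  rintro ⟨a, rfl⟩
  exact ⟨rfl, rfl⟩

lemma range_ofY : (ofY : Multiplicative (Vn n) →* ICarrier n).range = YSub n := by
  ext p
  refine ⟨?_, fun hp => ⟨.ofAdd p.y, ext hp.1.symm rfl hp.2.symm⟩⟩
  rintro ⟨b, rfl⟩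
  exact ⟨rfl, rfl⟩

lemma eq_ofX_mul_ofY_mul_ofTensor (p : ICarrier n) :
    p = ofX (.ofAdd p.x) * ofY (.ofAdd p.y) * ofTensor (.ofAdd p.A) := by
  ext <;> simp [tmul_zero]

open scoped commutatorElement

lemma ofTensor_tmul (a b : Vn n) :
    ofTensor (.ofAdd (a ⊗ₜ[ZMod 2] b)) = ⁅ofY (.ofAdd b), ofX (.ofAdd a)⁆ := by
  rw [commutatorElement_def]
  ext <;> simp [tmul_zero, char2_add_self]

lemma ofTensor_mem_of_commutatorElement_mem {H : Subgroup (ICarrier n)}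
    (hH : ∀ a b : Vn n, ⁅ofY (.ofAdd b), ofX (.ofAdd a)⁆ ∈ H) (A : Tn n) :
    ofTensor (.ofAdd A) ∈ H := by
  induction A using TensorProduct.induction_on with
  | zero => exact H.one_mem
  | tmul a b => rw [ofTensor_tmul]; exact hH a b
  | add A B hA hB => rw [ofAdd_add, map_mul]; exact H.mul_mem hA hB

noncomputable def xSubEquiv : XSub n ≃* (Fin n → Multiplicative (ZMod 2)) :=
  (MulEquiv.subgroupCongr range_ofX).symm.trans
    ((MonoidHom.ofInjective ofX_injective).symm.trans (MulEquiv.funMultiplicative _ _))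

noncomputable def ySubEquiv : YSub n ≃* (Fin n → Multiplicative (ZMod 2)) :=
  (MulEquiv.subgroupCongr range_ofY).symm.trans
    ((MonoidHom.ofInjective ofY_injective).symm.trans (MulEquiv.funMultiplicative _ _))

lemma closure_XSub_union_YSub :
    Subgroup.closure ((XSub n : Set (ICarrier n)) ∪ (YSub n : Set (ICarrier n))) = ⊤ := by
  set G := Subgroup.closure ((XSub n : Set (ICarrier n)) ∪ (YSub n : Set (ICarrier n)))
  have hX (a : Vn n) : ofX (.ofAdd a) ∈ G := Subgroup.subset_closure (Or.inl ⟨rfl, rfl⟩)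
  have hY (b : Vn n) : ofY (.ofAdd b) ∈ G := Subgroup.subset_closure (Or.inr ⟨rfl, rfl⟩)
  have hA := ofTensor_mem_of_commutatorElement_mem (H := G) fun a b => by
    rw [commutatorElement_def]
    exact G.mul_mem (G.mul_mem (G.mul_mem (hY b) (hX a)) (G.inv_mem (hY b))) (G.inv_mem (hX a))
  refine eq_top_iff.2 fun p _ => ?_
  rw [eq_ofX_mul_ofY_mul_ofTensor p]
  exact G.mul_mem (G.mul_mem (hX _) (hY _)) (hA _)

noncomputable def projXY : ICarrier n →* Multiplicative (Vn n × Vn n) where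
  toFun p := .ofAdd (p.x, p.y)
  map_one' := rfl
  map_mul' p q := by simp only [x_mul, y_mul]; rfl

lemma projXY_surjective : Function.Surjective (projXY : ICarrier n →* _) :=
  fun v => ⟨mk v.toAdd.1 v.toAdd.2 0, rfl⟩

lemma ker_projXY : (projXY : ICarrier n →* _).ker = commutator (ICarrier n) := by
  refine le_antisymm (fun p hp => ?_) (Abelianization.commutator_subset_ker _)
  have hxy : (p.x, p.y) = (0, 0) := MonoidHom.mem_ker.1 hp
  obtain ⟨hx, hy⟩ := Prod.ext_iff.1 hxy
  rw [show p = ofTensor (.ofAdd p.A) from ext hx hy rfl]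
  exact ofTensor_mem_of_commutatorElement_mem
    (fun _ _ => Subgroup.commutator_mem_commutator (Subgroup.mem_top _) (Subgroup.mem_top _)) _

end ICarrier

noncomputable def prodPiEquivPiFinTwoMul (M : Type*) [AddCommMonoid M] (n : ℕ) :
    Multiplicative ((Fin n → M) × (Fin n → M)) ≃* (Fin (2 * n) → Multiplicative M) :=
  let e : ((Fin n → M) × (Fin n → M)) ≃ₗ[ℕ] (Fin (2 * n) → M) :=
    (LinearEquiv.sumArrowLequivProdArrow _ _ _ _).symm.trans
      (LinearEquiv.funCongrLeft _ _ ((finCongr (two_mul n)).trans finSumFinEquiv.symm))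
  (AddEquiv.toMultiplicative e.toAddEquiv).trans (MulEquiv.funMultiplicative _ _)

theorem statement11_general (n : ℕ) :
    Nonempty ((XSub n) ≃* (Fin n → Multiplicative (ZMod 2))) ∧
    Nonempty ((YSub n) ≃* (Fin n → Multiplicative (ZMod 2))) ∧
    Subgroup.closure ((XSub n : Set (ICarrier n)) ∪ (YSub n : Set (ICarrier n))) = ⊤ ∧
    Nonempty ((ICarrier n ⧸ commutator (ICarrier n)) ≃*
      (Fin (2 * n) → Multiplicative (ZMod 2))) :=
  ⟨⟨ICarrier.xSubEquiv⟩, ⟨ICarrier.ySubEquiv⟩, ICarrier.closure_XSub_union_YSub,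
    ⟨(QuotientGroup.quotientMulEquivOfEq ICarrier.ker_projXY.symm).trans
      ((QuotientGroup.quotientKerEquivOfSurjective _ ICarrier.projXY_surjective).trans
        (prodPiEquivPiFinTwoMul (ZMod 2) n))⟩⟩

/-- For `n ≥ 2`, `I(n)` is an `n`-dimensional mixed dihedral group relative
to `X` and `Y`: `X` and `Y` are subgroups isomorphic to `C_2^n`, `I(n) = ⟨X, Y⟩`, and
`I(n)/I(n)' ≅ C_2^{2n}`. -/
theorem statement11 (n : ℕ) (hn : 2 ≤ n) :
    Nonempty ((XSub n) ≃* (Fin n → Multiplicative (ZMod 2))) ∧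
    Nonempty ((YSub n) ≃* (Fin n → Multiplicative (ZMod 2))) ∧
    Subgroup.closure ((XSub n : Set (ICarrier n)) ∪ (YSub n : Set (ICarrier n))) = ⊤ ∧
    Nonempty ((ICarrier n ⧸ commutator (ICarrier n)) ≃*
      (Fin (2 * n) → Multiplicative (ZMod 2))) :=
  statement11_general n
end

section
/- Let H be an n-dimensional mixed dihedral group relative to X and Y, and let Γ = Cay(H, S) with S = (X ∪ Y) \ {1}. Then for every triangle {g, h, k} in Γ, either all three of gh⁻¹, hk⁻¹, gk⁻¹ lie in X, or all three lie in Y. -/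
/-!
Mapping `X × Y` to the abelianization by `(x, y) ↦ [xy]` is onto because `X ∪ Y` generates `H`;
the order hypotheses give `|X| |Y| = |H/H'|`, so the map is a bijection and `X ∩ Y = 1`.
In a triangle `{g, h, k}` the edge labels `a = gh⁻¹`, `b = hk⁻¹` and `ab = gk⁻¹` are nontrivial
elements of `X ∪ Y`; if `a` and `b` lay in different subgroups, `ab` would push `a` or `b`
into `X ∩ Y`.
-/

/-- The Cayley graph `Cay(H, S)`: vertex set `H`, edges `{g, sg}` for `s ∈ S`. -/
def cayleyGraph {H : Type*} [Group H] (S : Set H) : SimpleGraph H :=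
  SimpleGraph.fromRel (fun a b => b * a⁻¹ ∈ S)

/-- The right coset `Xg` of a subgroup `X`, as a set. -/
def rcoset {H : Type*} [Group H] (X : Subgroup H) (g : H) : Set H :=
  {p | p * g⁻¹ ∈ X}

section

variable {H : Type*} [Group H]

theorem cayleyGraph_mul_inv_mem {S : Set H} (hS : ∀ s ∈ S, s⁻¹ ∈ S) {a b : H}
    (hab : (cayleyGraph S).Adj a b) : a * b⁻¹ ∈ S := by
  rcases ((SimpleGraph.fromRel_adj _ a b).1 hab).2 with h | h
  · simpa using hS _ h
  · exact h

namespace Subgroup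

variable {X Y : Subgroup H}

theorem exists_abelianization_of_mul_eq (hXY : X ⊔ Y = ⊤) (q : Abelianization H) :
    ∃ x ∈ X, ∃ y ∈ Y, Abelianization.of (x * y) = q := by
  obtain ⟨z, rfl⟩ := QuotientGroup.mk_surjective q
  have hz : Abelianization.of z ∈ (X ⊔ Y).map Abelianization.of :=
    mem_map_of_mem _ (hXY ▸ mem_top z)
  rw [map_sup, mem_sup] at hz
  obtain ⟨_, ⟨x, hx, rfl⟩, _, ⟨y, hy, rfl⟩, hxy⟩ := hz
  exact ⟨x, hx, y, hy, by rw [map_mul, hxy]; rfl⟩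

theorem disjoint_of_card_mul_card_le_card_abelianization [Finite X] [Finite Y]
    (hXY : X ⊔ Y = ⊤) (hcard : Nat.card X * Nat.card Y ≤ Nat.card (Abelianization H)) :
    Disjoint X Y := by
  let f : X × Y → Abelianization H := fun p => Abelianization.of (p.1 * p.2)
  have hsurj : Function.Surjective f := fun q => by
    obtain ⟨x, hx, y, hy, hq⟩ := exists_abelianization_of_mul_eq hXY q
    exact ⟨(⟨x, hx⟩, ⟨y, hy⟩), hq⟩
  have hinj : Function.Injective f := ((Nat.bijective_iff_surjective_and_card f).2
    ⟨hsurj, le_antisymm (Nat.card_prod X Y ▸ hcard) (Nat.card_le_card_of_surjective f hsurj)⟩).1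
  rw [disjoint_def]
  intro a haX haY
  simpa using congrArg (fun p => (p.1 : H)) (hinj (a₁ := (⟨a, haX⟩, 1)) (a₂ := (1, ⟨a, haY⟩))
    (by simp [f]))

theorem eq_one_or_eq_one_of_mul_mem_union (hXY : Disjoint X Y) {a b : H} (ha : a ∈ X)
    (hb : b ∈ Y) (hab : a * b ∈ (X : Set H) ∪ Y) : a = 1 ∨ b = 1 := by
  rcases hab with h | h
  · exact Or.inr (disjoint_def.1 hXY (by simpa using X.mul_mem (X.inv_mem ha) h) hb)
  · exact Or.inl (disjoint_def.1 hXY ha (by simpa using Y.mul_mem h (Y.inv_mem hb)))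

theorem mem_of_mul_mem_union_of_disjoint (hXY : Disjoint X Y) {a b : H}
    (ha : a ∈ ((X : Set H) ∪ Y) \ {1}) (hb : b ∈ ((X : Set H) ∪ Y) \ {1})
    (hab : a * b ∈ (X : Set H) ∪ Y) :
    (a ∈ X ∧ b ∈ X ∧ a * b ∈ X) ∨ (a ∈ Y ∧ b ∈ Y ∧ a * b ∈ Y) := by
  obtain ⟨haXY | haXY, ha1⟩ := ha <;> obtain ⟨hbXY | hbXY, hb1⟩ := hb
  · exact Or.inl ⟨haXY, hbXY, X.mul_mem haXY hbXY⟩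
  · exact ((eq_one_or_eq_one_of_mul_mem_union hXY haXY hbXY hab).elim ha1 hb1).elim
  · rw [Set.union_comm] at hab
    exact ((eq_one_or_eq_one_of_mul_mem_union hXY.symm haXY hbXY hab).elim ha1 hb1).elim
  · exact Or.inr ⟨haXY, hbXY, Y.mul_mem haXY hbXY⟩

end Subgroup

end

theorem statement13_general {H : Type*} [Group H] (n : ℕ)
    (X Y : Subgroup H)
    (hX : Nonempty (X ≃* (Fin n → Multiplicative (ZMod 2))))
    (hY : Nonempty (Y ≃* (Fin n → Multiplicative (ZMod 2))))
    (hgen : Subgroup.closure ((X : Set H) ∪ (Y : Set H)) = ⊤)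
    (hab : Nonempty ((H ⧸ commutator H) ≃* (Fin (2 * n) → Multiplicative (ZMod 2))))
    (g h k : H)
    (hgh : (cayleyGraph (((X : Set H) ∪ (Y : Set H)) \ {1})).Adj g h)
    (hhk : (cayleyGraph (((X : Set H) ∪ (Y : Set H)) \ {1})).Adj h k)
    (hgk : (cayleyGraph (((X : Set H) ∪ (Y : Set H)) \ {1})).Adj g k) :
    (g * h⁻¹ ∈ X ∧ h * k⁻¹ ∈ X ∧ g * k⁻¹ ∈ X) ∨
    (g * h⁻¹ ∈ Y ∧ h * k⁻¹ ∈ Y ∧ g * k⁻¹ ∈ Y) := by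
  obtain ⟨eX⟩ := hX
  obtain ⟨eY⟩ := hY
  obtain ⟨eA⟩ := hab
  have : Finite X := Finite.of_equiv _ eX.symm.toEquiv
  have : Finite Y := Finite.of_equiv _ eY.symm.toEquiv
  have hcard (m : ℕ) : Nat.card (Fin m → Multiplicative (ZMod 2)) = 2 ^ m := by simp
  have hXY : Disjoint X Y := Subgroup.disjoint_of_card_mul_card_le_card_abelianization
    (by rw [Subgroup.sup_eq_closure, hgen])
    (by rw [Nat.card_congr eX.toEquiv, Nat.card_congr eY.toEquiv, Abelianization,
      Nat.card_congr eA.toEquiv, hcard, hcard, ← pow_add, two_mul])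
  have hS : ∀ s ∈ ((X : Set H) ∪ Y) \ {1}, s⁻¹ ∈ ((X : Set H) ∪ Y) \ {1} := fun s hs => by
    simpa using hs
  have hgk' := cayleyGraph_mul_inv_mem hS hgk
  rw [show g * k⁻¹ = g * h⁻¹ * (h * k⁻¹) by group] at hgk' ⊢
  exact Subgroup.mem_of_mul_mem_union_of_disjoint hXY (cayleyGraph_mul_inv_mem hS hgh)
    (cayleyGraph_mul_inv_mem hS hhk) hgk'.1

/-- Let `H` be an `n`-dimensional mixed dihedral group relative to `X` and
`Y`, and `Γ = Cay(H, (X ∪ Y) \ {1})`. Then for every triangle `{g, h, k}` of `Γ`, either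
all three of `gh⁻¹, hk⁻¹, gk⁻¹` lie in `X`, or all three lie in `Y`. -/
theorem statement13 {H : Type*} [Group H] [Finite H] (n : ℕ) (hn : 2 ≤ n)
    (X Y : Subgroup H)
    (hX : Nonempty (X ≃* (Fin n → Multiplicative (ZMod 2))))
    (hY : Nonempty (Y ≃* (Fin n → Multiplicative (ZMod 2))))
    (hgen : Subgroup.closure ((X : Set H) ∪ (Y : Set H)) = ⊤)
    (hab : Nonempty ((H ⧸ commutator H) ≃* (Fin (2 * n) → Multiplicative (ZMod 2))))
    (g h k : H)
    (hgh : (cayleyGraph (((X : Set H) ∪ (Y : Set H)) \ {1})).Adj g h)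
    (hhk : (cayleyGraph (((X : Set H) ∪ (Y : Set H)) \ {1})).Adj h k)
    (hgk : (cayleyGraph (((X : Set H) ∪ (Y : Set H)) \ {1})).Adj g k) :
    (g * h⁻¹ ∈ X ∧ h * k⁻¹ ∈ X ∧ g * k⁻¹ ∈ X) ∨
    (g * h⁻¹ ∈ Y ∧ h * k⁻¹ ∈ Y ∧ g * k⁻¹ ∈ Y) :=
  statement13_general n X Y hX hY hgen hab g h k hgh hhk hgk
end
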